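/- arXiv:2311.00625 — 6 statements merged into one kernel-verified Lean document; each statement's English description precedes it below -/
import Mathlib

section
/- Let r ≥ 1 and let A and C be r×r real symmetric positive definite matrices such that the r eigenvalues of the product AC are pairwise distinct. Let Λ = diag(λ₁,…,λ_r) be the diagonal matrix of these eigenvalues in descending order and let P be an invertible r×r real matrix whose k-th column is an eigenvector of AC associated with λ_k, so that AC·P = P·Λ. Then U := P⁻¹AP⁻ᵀ and V := PᵀCP are invertible diagonal matrices, and U·V = Λ. -/
open Matrix

/-!
`U` and `V` are symmetric and `U * V = P⁻¹ * (A * C * P) = Λ`; transposing gives `V * U = Λ`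
as well, so `U * Λ = U * V * U = Λ * U` and likewise for `V`. A matrix commuting with a
diagonal matrix with distinct entries is diagonal, and `U`, `V` are invertible as products of
invertible matrices, so their diagonal entries are nonzero.
-/

namespace Matrix

variable {n α : Type*}

theorem PosDef.isSymm {A : Matrix n n ℝ} (hA : A.PosDef) : A.IsSymm :=
  (conjTranspose_eq_transpose_of_trivial A).symm.trans hA.isHermitian.eq

variable [Fintype n]

theorem IsSymm.transpose_mul_mul [CommSemiring α] {A : Matrix n n α} (hA : A.IsSymm)
    (B : Matrix n n α) : (Bᵀ * A * B).IsSymm := by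
  rw [IsSymm, transpose_mul, transpose_mul, transpose_transpose, hA.eq, Matrix.mul_assoc]

variable [DecidableEq n]

theorem IsDiag.of_commute_diagonal [CommRing α] [NoZeroDivisors α] {d : n → α}
    (hd : Function.Injective d) {M : Matrix n n α} (h : Commute M (diagonal d)) : M.IsDiag := by
  intro i j hij
  have hij' : M i j * d j = d i * M i j := by
    simpa only [mul_diagonal, diagonal_mul] using congr_fun₂ h.eq i j
  have : (d j - d i) * M i j = 0 := by linear_combination hij'
  exact (mul_eq_zero.1 this).resolve_left (sub_ne_zero.2 (hd.ne (Ne.symm hij)))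

theorem commute_diagonal_of_isSymm_of_mul_eq_diagonal [CommSemiring α] {U V : Matrix n n α}
    {d : n → α} (hU : U.IsSymm) (hV : V.IsSymm) (h : U * V = diagonal d) :
    Commute U (diagonal d) ∧ Commute V (diagonal d) := by
  have h' : V * U = diagonal d := by
    rw [← hU.eq, ← hV.eq, ← transpose_mul, h, diagonal_transpose]
  exact ⟨(commute_iff_eq _ _).2 (by simpa only [h, h'] using (Matrix.mul_assoc U V U).symm),
    (commute_iff_eq _ _).2 (by simpa only [h, h'] using (Matrix.mul_assoc V U V).symm)⟩

theorem IsDiag.exists_eq_diagonal_of_isUnit [CommRing α] [Nontrivial α] {M : Matrix n n α}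
    (hM : M.IsDiag) (hu : IsUnit M) : ∃ u : n → α, (∀ k, u k ≠ 0) ∧ M = diagonal u := by
  refine ⟨M.diag, fun k => ?_, hM.diagonal_diag.symm⟩
  rw [← hM.diagonal_diag, isUnit_diagonal, Pi.isUnit_iff] at hu
  exact (hu k).ne_zero

theorem inv_mul_mul_inv_transpose_mul_transpose_mul_mul [CommRing α] {P : Matrix n n α}
    (hP : IsUnit P.det) (A C : Matrix n n α) :
    P⁻¹ * A * P⁻¹ᵀ * (Pᵀ * C * P) = P⁻¹ * (A * C * P) := by
  have hPt : P⁻¹ᵀ * Pᵀ = 1 := by rw [← transpose_mul, mul_nonsing_inv P hP, transpose_one]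
  simp only [Matrix.mul_assoc]
  rw [← Matrix.mul_assoc P⁻¹ᵀ, hPt, Matrix.one_mul]

end Matrix

theorem pc_rotation_UV_diagonal_general
    (r : ℕ)
    (A C P : Matrix (Fin r) (Fin r) ℝ)
    (hA : A.PosDef) (hC : C.PosDef)
    (lam : Fin r → ℝ) (hlam : StrictAnti lam)
    (hP : IsUnit P.det)
    (heig : A * C * P = P * Matrix.diagonal lam) :
    (∃ u : Fin r → ℝ, (∀ k, u k ≠ 0) ∧ P⁻¹ * A * (P⁻¹)ᵀ = Matrix.diagonal u) ∧
    (∃ v : Fin r → ℝ, (∀ k, v k ≠ 0) ∧ Pᵀ * C * P = Matrix.diagonal v) ∧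
    (P⁻¹ * A * (P⁻¹)ᵀ) * (Pᵀ * C * P) = Matrix.diagonal lam := by
  have hPu : IsUnit P := (isUnit_iff_isUnit_det P).2 hP
  have hUV : P⁻¹ * A * P⁻¹ᵀ * (Pᵀ * C * P) = diagonal lam := by
    rw [inv_mul_mul_inv_transpose_mul_transpose_mul_mul hP, heig, ← Matrix.mul_assoc,
      nonsing_inv_mul P hP, Matrix.one_mul]
  have hUs : (P⁻¹ * A * P⁻¹ᵀ).IsSymm := by
    simpa only [transpose_transpose] using hA.isSymm.transpose_mul_mul P⁻¹ᵀ
  obtain ⟨hUc, hVc⟩ := commute_diagonal_of_isSymm_of_mul_eq_diagonal hUs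
    (hC.isSymm.transpose_mul_mul P) hUV
  have hPinv : IsUnit P⁻¹ := isUnit_nonsing_inv_iff.2 hPu
  exact ⟨(IsDiag.of_commute_diagonal hlam.injective hUc).exists_eq_diagonal_of_isUnit
      ((hPinv.mul hA.isUnit).mul ((isUnit_transpose _).2 hPinv)),
    (IsDiag.of_commute_diagonal hlam.injective hVc).exists_eq_diagonal_of_isUnit
      ((((isUnit_transpose _).2 hPu).mul hC.isUnit).mul hPu),
    hUV⟩

/-- **Lemma 2.1 (Jiang–Uematsu–Yamagata).**
Let `A` and `C` be `r × r` real symmetric positive definite matrices such that the `r`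
eigenvalues of `A * C` are pairwise distinct.  Let `Λ = diagonal lam` be the diagonal matrix
of these eigenvalues in (strictly) descending order and let `P` be an invertible matrix of
associated eigenvectors, so that `A * C * P = P * Λ`.  Then `U := P⁻¹ * A * P⁻ᵀ` and
`V := Pᵀ * C * P` are invertible diagonal matrices and `U * V = Λ`. -/
theorem pc_rotation_UV_diagonal
    (r : ℕ) (hr : 1 ≤ r)
    (A C P : Matrix (Fin r) (Fin r) ℝ)
    (hA : A.PosDef) (hC : C.PosDef)
    (lam : Fin r → ℝ) (hlam : StrictAnti lam)
    (hP : IsUnit P.det)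
    (heig : A * C * P = P * Matrix.diagonal lam) :
    (∃ u : Fin r → ℝ, (∀ k, u k ≠ 0) ∧ P⁻¹ * A * (P⁻¹)ᵀ = Matrix.diagonal u) ∧
    (∃ v : Fin r → ℝ, (∀ k, v k ≠ 0) ∧ Pᵀ * C * P = Matrix.diagonal v) ∧
    (P⁻¹ * A * (P⁻¹)ᵀ) * (Pᵀ * C * P) = Matrix.diagonal lam :=
  pc_rotation_UV_diagonal_general r A C P hA hC lam hlam hP heig
end

section
/- Let F ∈ ℝ^{T×r} and B ∈ ℝ^{N×r} be real matrices such that T⁻¹FᵀF and BᵀB are symmetric positive definite and the r eigenvalues λ₁ > λ₂ > … > λ_r > 0 of BᵀB(T⁻¹FᵀF) are pairwise distinct. Let P be an invertible r×r matrix of corresponding eigenvectors, i.e. BᵀB(T⁻¹FᵀF)P = PΛ with Λ = diag(λ₁,…,λ_r), and let V := Pᵀ(T⁻¹FᵀF)P, which is diagonal with positive diagonal entries. Then the matrix H := P·V^{-1/2} is invertible, and the rotated matrices F⁰ := FH and B⁰ := BH⁻ᵀ satisfy T⁻¹F⁰ᵀF⁰ = I_r and B⁰ᵀB⁰ = Λ;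 in particular B⁰ᵀB⁰ is diagonal with strictly decreasing positive diagonal entries, and F⁰B⁰ᵀ = FBᵀ. -/
/-!
With `A = T⁻¹FᵀF`, the normalisation by `V^{-1/2}` makes `HᵀAH = 1`. So `HᵀA` is a left inverse
of `H` (which makes `H` invertible), and by symmetry of `A` we get `H⁻ᵀ = AH`. Rescaling the
columns of `P` keeps them eigenvectors, `BᵀBAH = HΛ`, hence
`B⁰ᵀB⁰ = HᵀA (BᵀBAH) = (HᵀAH) Λ = Λ`.
-/

open Matrix

namespace Matrix

variable {l m n R : Type*} [Fintype n] [CommRing R]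

theorem smul_transpose_mul_self_mul [Fintype m] (c : R) (F : Matrix m n R) (H : Matrix n n R) :
    c • ((F * H)ᵀ * (F * H)) = Hᵀ * (c • (Fᵀ * F)) * H := by
  simp only [transpose_mul, Matrix.mul_smul, Matrix.smul_mul, Matrix.mul_assoc]

variable [DecidableEq n]

theorem transpose_mul_mul_mul_diagonal (P A : Matrix n n R) (d : n → R) :
    (P * diagonal d)ᵀ * A * (P * diagonal d) = diagonal d * (Pᵀ * A * P) * diagonal d := by
  simp only [transpose_mul, diagonal_transpose, Matrix.mul_assoc]

theorem mul_mul_diagonal_eq_of_mul_eq_mul_diagonal {M P : Matrix n n R} {lam : n → R}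
    (h : M * P = P * diagonal lam) (d : n → R) :
    M * (P * diagonal d) = P * diagonal d * diagonal lam := by
  rw [← Matrix.mul_assoc, h, Matrix.mul_assoc, Matrix.mul_assoc, diagonal_mul_diagonal,
    diagonal_mul_diagonal]
  simp only [mul_comm]

theorem transpose_inv_eq_of_transpose_mul_mul_eq_one {A H : Matrix n n R} (hA : A.IsSymm)
    (hH : Hᵀ * A * H = 1) : H⁻¹ᵀ = A * H := by
  rw [inv_eq_left_inv hH, transpose_mul, transpose_transpose, hA.eq]

theorem transpose_mul_self_mul_transpose_inv_eq [Fintype m] {A H Λ : Matrix n n R}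
    (hA : A.IsSymm) (hH : Hᵀ * A * H = 1) (B : Matrix m n R) (heig : Bᵀ * B * A * H = H * Λ) :
    (B * H⁻¹ᵀ)ᵀ * (B * H⁻¹ᵀ) = Λ := by
  rw [transpose_inv_eq_of_transpose_mul_mul_eq_one hA hH]
  calc (B * (A * H))ᵀ * (B * (A * H))
      = Hᵀ * Aᵀ * (Bᵀ * B * A * H) := by simp only [transpose_mul, Matrix.mul_assoc]
    _ = Λ := by rw [hA.eq, heig, ← Matrix.mul_assoc, hH, Matrix.one_mul]

theorem mul_mul_transpose_inv_transpose {H : Matrix n n R} (hH : IsUnit H.det)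
    (F : Matrix m n R) (B : Matrix l n R) : F * H * (B * H⁻¹ᵀ)ᵀ = F * Bᵀ := by
  rw [transpose_mul, transpose_transpose, Matrix.mul_assoc, ← Matrix.mul_assoc H,
    mul_nonsing_inv _ hH, Matrix.one_mul]

theorem diagonal_inv_sqrt_mul_diagonal_mul_diagonal_inv_sqrt {v : n → ℝ} (hv : ∀ k, 0 < v k) :
    diagonal (fun k => (√(v k))⁻¹) * diagonal v * diagonal (fun k => (√(v k))⁻¹) = 1 := by
  rw [diagonal_mul_diagonal, diagonal_mul_diagonal, ← diagonal_one]
  congr 1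
  funext k
  have hsqrt : √(v k) ≠ 0 := (Real.sqrt_pos.2 (hv k)).ne'
  field_simp
  exact (Real.sq_sqrt (hv k).le).symm

end Matrix

theorem pc_rotation_exists_general
    (T N r : ℕ)
    (F : Matrix (Fin T) (Fin r) ℝ) (B : Matrix (Fin N) (Fin r) ℝ)
    (lam : Fin r → ℝ)
    (P : Matrix (Fin r) (Fin r) ℝ)
    (heig : Bᵀ * B * ((T : ℝ)⁻¹ • (Fᵀ * F)) * P = P * Matrix.diagonal lam)
    (v : Fin r → ℝ) (hv : ∀ k, 0 < v k)
    (hV : Pᵀ * ((T : ℝ)⁻¹ • (Fᵀ * F)) * P = Matrix.diagonal v) :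
    let H := P * Matrix.diagonal (fun k => (Real.sqrt (v k))⁻¹)
    IsUnit H.det ∧
    (T : ℝ)⁻¹ • ((F * H)ᵀ * (F * H)) = 1 ∧
    (B * (H⁻¹)ᵀ)ᵀ * (B * (H⁻¹)ᵀ) = Matrix.diagonal lam ∧
    (F * H) * (B * (H⁻¹)ᵀ)ᵀ = F * Bᵀ := by
  intro H
  set A := (T : ℝ)⁻¹ • (Fᵀ * F)
  have hA : A.IsSymm := IsSymm.smul (transpose_mul Fᵀ F) _
  have hHAH : Hᵀ * A * H = 1 := by
    rw [transpose_mul_mul_mul_diagonal, hV,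
      diagonal_inv_sqrt_mul_diagonal_mul_diagonal_inv_sqrt hv]
  have hH : IsUnit H.det := isUnit_det_of_left_inverse hHAH
  have heigH : Bᵀ * B * A * H = H * diagonal lam :=
    mul_mul_diagonal_eq_of_mul_eq_mul_diagonal heig _
  exact ⟨hH, (smul_transpose_mul_self_mul _ F H).trans hHAH,
    transpose_mul_self_mul_transpose_inv_eq hA hHAH B heigH,
    mul_mul_transpose_inv_transpose hH F B⟩

/-- **Theorem 2.1 (existence part).**
Let `F ∈ ℝ^{T×r}` and `B ∈ ℝ^{N×r}` with `T⁻¹FᵀF` and `BᵀB` symmetric positive definite and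
the eigenvalues `lam 0 > lam 1 > … > 0` of `BᵀB (T⁻¹FᵀF)` pairwise distinct.  Let `P` be an
invertible eigenvector matrix, `BᵀB (T⁻¹FᵀF) P = P Λ`, and `V := Pᵀ (T⁻¹FᵀF) P = diagonal v`
(with `v` positive, by Lemma 2.1).  Then `H := P * V^{-1/2}` is invertible and the rotated
matrices `F⁰ := F * H`, `B⁰ := B * H⁻ᵀ` satisfy `T⁻¹F⁰ᵀF⁰ = I`, `B⁰ᵀB⁰ = Λ` (diagonal with
strictly decreasing positive entries) and `F⁰B⁰ᵀ = FBᵀ`. -/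
theorem pc_rotation_exists
    (T N r : ℕ) (hT : 0 < T)
    (F : Matrix (Fin T) (Fin r) ℝ) (B : Matrix (Fin N) (Fin r) ℝ)
    (hF : ((T : ℝ)⁻¹ • (Fᵀ * F)).PosDef) (hB : (Bᵀ * B).PosDef)
    (lam : Fin r → ℝ) (hlam : StrictAnti lam) (hlampos : ∀ k, 0 < lam k)
    (P : Matrix (Fin r) (Fin r) ℝ) (hP : IsUnit P.det)
    (heig : Bᵀ * B * ((T : ℝ)⁻¹ • (Fᵀ * F)) * P = P * Matrix.diagonal lam)
    (v : Fin r → ℝ) (hv : ∀ k, 0 < v k)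
    (hV : Pᵀ * ((T : ℝ)⁻¹ • (Fᵀ * F)) * P = Matrix.diagonal v) :
    let H := P * Matrix.diagonal (fun k => (Real.sqrt (v k))⁻¹)
    IsUnit H.det ∧
    (T : ℝ)⁻¹ • ((F * H)ᵀ * (F * H)) = 1 ∧
    (B * (H⁻¹)ᵀ)ᵀ * (B * (H⁻¹)ᵀ) = Matrix.diagonal lam ∧
    (F * H) * (B * (H⁻¹)ᵀ)ᵀ = F * Bᵀ :=
  pc_rotation_exists_general T N r F B lam P heig v hv hV
end

section
/- Let F ∈ ℝ^{T×r} and B ∈ ℝ^{N×r} with T⁻¹FᵀF and BᵀB symmetric positive definite and the r eigenvalues λ₁ > … > λ_r > 0 of BᵀB(T⁻¹FᵀF) pairwise distinct, and let H = P·V^{-1/2} be the rotation of Theorem 2.1, so that T⁻¹(FH)ᵀ(FH) = I_r and (BH⁻ᵀ)ᵀ(BH⁻ᵀ) = Λ = diag(λ₁,…,λ_r). If H̄ is any invertible r×r real matrix such that T⁻¹(FH̄)ᵀ(FH̄) = I_r and (BH̄⁻ᵀ)ᵀ(BH̄⁻ᵀ) is a diagonal matrix with positive diagonal entries in strictly decreasing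 order, then H̄ = H·S for some diagonal matrix S each of whose diagonal entries is +1 or −1. -/
/-!
Both `H` and `Hbar` turn the form `A = T⁻¹FᵀF` into the identity, so `Q = H⁻¹ Hbar` is
orthogonal, and it conjugates `Λ` into the diagonal matrix of `Hbar`'s restrictions on `B`.
An orthogonal `Q` with `Qᵀ Λ Q = diag μ` satisfies `Q diag μ = Λ Q`, so `Q i j ≠ 0` forces
`λ i = μ j`. Every column of `Q` has a nonzero entry, and since both sequences are strictly
decreasing the only possible matching is `i = j`: `Q` is diagonal, with entries squaring to `1`.
-/

open Matrix

namespace Matrix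

variable {m n R : Type*} [Fintype n]

section CommRing

variable [CommRing R]

theorem transpose_mul_self_mul_right [Fintype m] {k : Type*} (F : Matrix m n R)
    (H : Matrix n k R) : (F * H)ᵀ * (F * H) = Hᵀ * (Fᵀ * F) * H := by
  simp only [transpose_mul, Matrix.mul_assoc]

variable [DecidableEq n]

theorem isUnit_det_of_transpose_mul_mul_eq_one {A H : Matrix n n R} (h : Hᵀ * A * H = 1) :
    IsUnit H.det := by
  have hdet := congrArg det h
  rw [det_mul, det_mul, det_one] at hdet
  exact IsUnit.of_mul_eq_one_right _ hdet

theorem eq_transpose_inv_mul_inv_of_transpose_mul_mul_eq_one {A H : Matrix n n R}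
    (h : Hᵀ * A * H = 1) : A = (H⁻¹)ᵀ * H⁻¹ := by
  have hinv : (Hᵀ)⁻¹ = A * H := inv_eq_right_inv (by rw [← Matrix.mul_assoc, h])
  rw [transpose_nonsing_inv, hinv, Matrix.mul_nonsing_inv_cancel_right _ _
    (isUnit_det_of_transpose_mul_mul_eq_one h)]

theorem transpose_mul_self_inv_mul_eq_one {A H G : Matrix n n R} (hH : Hᵀ * A * H = 1)
    (hG : Gᵀ * A * G = 1) : (H⁻¹ * G)ᵀ * (H⁻¹ * G) = 1 := by
  rw [transpose_mul_self_mul_right, ← eq_transpose_inv_mul_inv_of_transpose_mul_mul_eq_one hH, hG]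

theorem transpose_inv_mul_of_transpose_mul_self_eq_one {H Q : Matrix n n R}
    (hQ : Qᵀ * Q = 1) : ((H * Q)⁻¹)ᵀ = (H⁻¹)ᵀ * Q := by
  rw [mul_inv_rev, inv_eq_left_inv hQ, transpose_mul, transpose_transpose]

theorem mul_diagonal_eq_diagonal_mul_of_transpose_mul_diagonal_mul_eq {Q : Matrix n n R}
    {d e : n → R} (hQ : Qᵀ * Q = 1) (h : Qᵀ * diagonal d * Q = diagonal e) :
    Q * diagonal e = diagonal d * Q := by
  rw [← h, ← Matrix.mul_assoc, ← Matrix.mul_assoc, mul_eq_one_comm.mp hQ, Matrix.one_mul]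

theorem exists_ne_zero_of_transpose_mul_self_eq_one [Nontrivial R] {Q : Matrix n n R}
    (hQ : Qᵀ * Q = 1) (j : n) : ∃ i, Q i j ≠ 0 := by
  by_contra! h
  have hjj := congrFun (congrFun hQ j) j
  simp [mul_apply, h] at hjj

end CommRing

section Domain

variable [DecidableEq n] [CommRing R] [IsDomain R] {Q : Matrix n n R}

theorem eq_of_ne_zero_of_mul_diagonal_eq_diagonal_mul {d e : n → R}
    (h : Q * diagonal e = diagonal d * Q) {i j : n} (hij : Q i j ≠ 0) : d i = e j := by
  have hentry := congrFun (congrFun h i) j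
  rw [mul_diagonal, diagonal_mul, mul_comm] at hentry
  exact (mul_right_cancel₀ hij hentry).symm

theorem exists_sign_eq_diagonal_of_transpose_mul_self_eq_one (hQ : Qᵀ * Q = 1)
    (hdiag : ∀ i j, Q i j ≠ 0 → i = j) :
    ∃ s : n → R, (∀ k, s k = 1 ∨ s k = -1) ∧ Q = diagonal s := by
  have hQd : Q = diagonal fun j => Q j j := by
    ext i j
    by_cases hij : i = j
    · subst hij; simp
    · rw [diagonal_apply_ne _ hij]
      exact not_not.mp (mt (hdiag i j) hij)
  refine ⟨fun j => Q j j, fun j => mul_self_eq_one_iff.mp ?_, hQd⟩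
  have hjj := congrFun (congrFun hQ j) j
  rwa [hQd, diagonal_transpose, diagonal_mul_diagonal, diagonal_apply_eq, one_apply_eq] at hjj

variable [LinearOrder n] [PartialOrder R]

theorem eq_of_ne_zero_of_mul_diagonal_eq_diagonal_mul_of_strictAnti {d e : n → R}
    (hd : StrictAnti d) (he : StrictAnti e) (hQ : Qᵀ * Q = 1)
    (h : Q * diagonal e = diagonal d * Q) {i j : n} (hij : Q i j ≠ 0) : i = j := by
  choose σ hσ using exists_ne_zero_of_transpose_mul_self_eq_one hQ
  have hdσ : ∀ j, d (σ j) = e j := fun j => eq_of_ne_zero_of_mul_diagonal_eq_diagonal_mul h (hσ j)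
  have hσmono : StrictMono σ := fun a b hab => hd.lt_iff_gt.mp (by rw [hdσ, hdσ]; exact he hab)
  have hσid : σ = id := hσmono.eq_id
  apply hd.injective
  rw [eq_of_ne_zero_of_mul_diagonal_eq_diagonal_mul h hij, ← hdσ, hσid, id]

theorem exists_sign_eq_diagonal_of_transpose_mul_diagonal_mul_eq {d e : n → R}
    (hd : StrictAnti d) (he : StrictAnti e) (hQ : Qᵀ * Q = 1)
    (h : Qᵀ * diagonal d * Q = diagonal e) :
    ∃ s : n → R, (∀ k, s k = 1 ∨ s k = -1) ∧ Q = diagonal s :=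
  exists_sign_eq_diagonal_of_transpose_mul_self_eq_one hQ fun _ _ =>
    eq_of_ne_zero_of_mul_diagonal_eq_diagonal_mul_of_strictAnti hd he hQ
      (mul_diagonal_eq_diagonal_mul_of_transpose_mul_diagonal_mul_eq hQ h)

end Domain

end Matrix

theorem pc_rotation_unique_up_to_sign_general
    (T N r : ℕ)
    (F : Matrix (Fin T) (Fin r) ℝ) (B : Matrix (Fin N) (Fin r) ℝ)
    (lam : Fin r → ℝ) (hlam : StrictAnti lam)
    -- the reference rotation H and its identifying restrictions
    (H : Matrix (Fin r) (Fin r) ℝ)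
    (hHF : (T : ℝ)⁻¹ • ((F * H)ᵀ * (F * H)) = 1)
    (hHB : (B * (H⁻¹)ᵀ)ᵀ * (B * (H⁻¹)ᵀ) = Matrix.diagonal lam)
    -- any other rotation satisfying the r² restrictions
    (Hbar : Matrix (Fin r) (Fin r) ℝ)
    (hbarF : (T : ℝ)⁻¹ • ((F * Hbar)ᵀ * (F * Hbar)) = 1)
    (μ : Fin r → ℝ) (hμ : StrictAnti μ)
    (hbarB : (B * (Hbar⁻¹)ᵀ)ᵀ * (B * (Hbar⁻¹)ᵀ) = Matrix.diagonal μ) :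
    ∃ s : Fin r → ℝ, (∀ k, s k = 1 ∨ s k = -1) ∧ Hbar = H * Matrix.diagonal s := by
  set A := (T : ℝ)⁻¹ • (Fᵀ * F)
  have hform : ∀ G, (T : ℝ)⁻¹ • ((F * G)ᵀ * (F * G)) = 1 → Gᵀ * A * G = 1 := fun G h => by
    rwa [transpose_mul_self_mul_right, ← Matrix.smul_mul, ← Matrix.mul_smul] at h
  set Q := H⁻¹ * Hbar
  have hQ : Qᵀ * Q = 1 := transpose_mul_self_inv_mul_eq_one (hform H hHF) (hform Hbar hbarF)
  have hHbarQ : Hbar = H * Q :=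
    (mul_nonsing_inv_cancel_left H Hbar (isUnit_det_of_transpose_mul_mul_eq_one (hform H hHF))).symm
  rw [hHbarQ, transpose_inv_mul_of_transpose_mul_self_eq_one hQ, ← Matrix.mul_assoc B,
    transpose_mul_self_mul_right, hHB] at hbarB
  obtain ⟨s, hs, hQs⟩ := exists_sign_eq_diagonal_of_transpose_mul_diagonal_mul_eq hlam hμ hQ hbarB
  exact ⟨s, hs, hQs ▸ hHbarQ⟩

/-- **Theorem 2.1 (uniqueness part).**
With `H = P * V^{-1/2}` the rotation of Theorem 2.1 (so that `T⁻¹(FH)ᵀ(FH) = I` and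
`(BH⁻ᵀ)ᵀ(BH⁻ᵀ) = Λ`), any other invertible matrix `Hbar` with `T⁻¹(F Hbar)ᵀ(F Hbar) = I`
and `(B Hbar⁻ᵀ)ᵀ(B Hbar⁻ᵀ)` diagonal with positive strictly decreasing diagonal entries
satisfies `Hbar = H * S` for a diagonal sign matrix `S`. -/
theorem pc_rotation_unique_up_to_sign
    (T N r : ℕ) (hT : 0 < T)
    (F : Matrix (Fin T) (Fin r) ℝ) (B : Matrix (Fin N) (Fin r) ℝ)
    (hF : ((T : ℝ)⁻¹ • (Fᵀ * F)).PosDef) (hB : (Bᵀ * B).PosDef)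
    (lam : Fin r → ℝ) (hlam : StrictAnti lam) (hlampos : ∀ k, 0 < lam k)
    (P : Matrix (Fin r) (Fin r) ℝ) (hP : IsUnit P.det)
    (heig : Bᵀ * B * ((T : ℝ)⁻¹ • (Fᵀ * F)) * P = P * Matrix.diagonal lam)
    (v : Fin r → ℝ) (hv : ∀ k, 0 < v k)
    (hV : Pᵀ * ((T : ℝ)⁻¹ • (Fᵀ * F)) * P = Matrix.diagonal v)
    -- the reference rotation H and its identifying restrictions
    (H : Matrix (Fin r) (Fin r) ℝ)
    (hH : H = P * Matrix.diagonal (fun k => (Real.sqrt (v k))⁻¹))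
    (hHF : (T : ℝ)⁻¹ • ((F * H)ᵀ * (F * H)) = 1)
    (hHB : (B * (H⁻¹)ᵀ)ᵀ * (B * (H⁻¹)ᵀ) = Matrix.diagonal lam)
    -- any other rotation satisfying the r² restrictions
    (Hbar : Matrix (Fin r) (Fin r) ℝ) (hHbar : IsUnit Hbar.det)
    (hbarF : (T : ℝ)⁻¹ • ((F * Hbar)ᵀ * (F * Hbar)) = 1)
    (μ : Fin r → ℝ) (hμ : StrictAnti μ) (hμpos : ∀ k, 0 < μ k)
    (hbarB : (B * (Hbar⁻¹)ᵀ)ᵀ * (B * (Hbar⁻¹)ᵀ) = Matrix.diagonal μ) :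
    ∃ s : Fin r → ℝ, (∀ k, s k = 1 ∨ s k = -1) ∧ Hbar = H * Matrix.diagonal s :=
  pc_rotation_unique_up_to_sign_general T N r F B lam hlam H hHF hHB Hbar hbarF μ hμ hbarB
end

section
/- Let F ∈ ℝ^{T×r} and B ∈ ℝ^{N×r} with T⁻¹FᵀF and BᵀB symmetric positive definite and the r eigenvalues λ₁ > … > λ_r > 0 of BᵀB(T⁻¹FᵀF) pairwise distinct. With P an invertible eigenvector matrix satisfying BᵀB(T⁻¹FᵀF)P = PΛ for Λ = diag(λ₁,…,λ_r), V = Pᵀ(T⁻¹FᵀF)P, H = P·V^{-1/2}, and F⁰ = FH, the rotation matrix admits the representation H = BᵀB·(T⁻¹FᵀF⁰)·Λ⁻¹. -/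
open Matrix

/-! Rescaling the columns of an eigenvector matrix `P` of `A = BᵀB (T⁻¹FᵀF)` keeps them
eigenvectors, so `A H = H Λ` for `H = P V^{-1/2}`; since `T⁻¹Fᵀ(FH) = (T⁻¹FᵀF) H`, the
representation is this identity multiplied on the right by `Λ⁻¹`. -/

namespace Matrix

variable {n R : Type*} [Fintype n] [DecidableEq n]

theorem mul_mul_diagonal_of_mul_eq_mul_diagonal [CommSemiring R] {A P : Matrix n n R} {lam : n → R}
    (h : A * P = P * diagonal lam) (d : n → R) :
    A * (P * diagonal d) = P * diagonal d * diagonal lam := by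
  rw [← Matrix.mul_assoc, h, Matrix.mul_assoc, Matrix.mul_assoc, (commute_diagonal lam d).eq]

theorem eq_mul_mul_inv_of_mul_eq_mul [CommRing R] {A H D : Matrix n n R} (hD : IsUnit D.det)
    (h : A * H = H * D) : H = A * H * D⁻¹ := by
  rw [h, mul_nonsing_inv_cancel_right _ _ hD]

end Matrix

theorem pc_rotation_representation_general
    (T N r : ℕ)
    (F : Matrix (Fin T) (Fin r) ℝ) (B : Matrix (Fin N) (Fin r) ℝ)
    (lam : Fin r → ℝ) (hlampos : ∀ k, 0 < lam k)
    (P : Matrix (Fin r) (Fin r) ℝ)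
    (heig : Bᵀ * B * ((T : ℝ)⁻¹ • (Fᵀ * F)) * P = P * Matrix.diagonal lam)
    (v : Fin r → ℝ) :
    let H := P * Matrix.diagonal (fun k => (Real.sqrt (v k))⁻¹)
    H = Bᵀ * B * ((T : ℝ)⁻¹ • (Fᵀ * (F * H))) * (Matrix.diagonal lam)⁻¹ := by
  intro H
  have hΛ : IsUnit (diagonal lam).det := by
    rw [det_diagonal]
    exact (Finset.prod_pos fun k _ => hlampos k).ne'.isUnit
  rw [← Matrix.mul_assoc, ← Matrix.smul_mul, ← Matrix.mul_assoc]
  exact eq_mul_mul_inv_of_mul_eq_mul hΛ (mul_mul_diagonal_of_mul_eq_mul_diagonal heig _)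

/-- **Equation (7) of the paper.**
With `P` an invertible eigenvector matrix of `BᵀB (T⁻¹FᵀF)` (eigenvalues `lam`, strictly
decreasing and positive), `V = Pᵀ (T⁻¹FᵀF) P = diagonal v`, `H = P * V^{-1/2}` and
`F⁰ = F * H`, the rotation matrix admits the representation
`H = BᵀB ⬝ (T⁻¹ Fᵀ F⁰) ⬝ Λ⁻¹`. -/
theorem pc_rotation_representation
    (T N r : ℕ) (hT : 0 < T)
    (F : Matrix (Fin T) (Fin r) ℝ) (B : Matrix (Fin N) (Fin r) ℝ)
    (hF : ((T : ℝ)⁻¹ • (Fᵀ * F)).PosDef) (hB : (Bᵀ * B).PosDef)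
    (lam : Fin r → ℝ) (hlam : StrictAnti lam) (hlampos : ∀ k, 0 < lam k)
    (P : Matrix (Fin r) (Fin r) ℝ) (hP : IsUnit P.det)
    (heig : Bᵀ * B * ((T : ℝ)⁻¹ • (Fᵀ * F)) * P = P * Matrix.diagonal lam)
    (v : Fin r → ℝ) (hv : ∀ k, 0 < v k)
    (hV : Pᵀ * ((T : ℝ)⁻¹ • (Fᵀ * F)) * P = Matrix.diagonal v) :
    let H := P * Matrix.diagonal (fun k => (Real.sqrt (v k))⁻¹)
    H = Bᵀ * B * ((T : ℝ)⁻¹ • (Fᵀ * (F * H))) * (Matrix.diagonal lam)⁻¹ :=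
  pc_rotation_representation_general T N r F B lam hlampos P heig v
end

section
/- Let F⁰ ∈ ℝ^{T×r}, B⁰ ∈ ℝ^{N×r}, E ∈ ℝ^{T×N} and set X = F⁰B⁰ᵀ + E. Let F̂ ∈ ℝ^{T×r} with T⁻¹F̂ᵀF̂ = I_r and let Λ̂ be an invertible r×r diagonal matrix such that T⁻¹XXᵀF̂ = F̂Λ̂, and define B̂ = T⁻¹XᵀF̂. Then: (0) B̂ᵀB̂ = Λ̂; (i) with H̃₄ := B⁰ᵀB̂Λ̂⁻¹ and H̃ := B⁰ᵀB⁰(T⁻¹F⁰ᵀF̂)Λ̂⁻¹, one has H̃₄ − H̃ = T⁻¹B⁰ᵀEᵀF̂Λ̂⁻¹; (ii) if in addition T⁻¹F⁰ᵀF⁰ = I_r, then with H̃₂ := T⁻¹F⁰ᵀF̂ one has H̃₂ − H̃₄ = T⁻¹F⁰ᵀEB̂Λ̂⁻¹. -/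
/-!
Everything follows from the single observation `X B̂ = F̂ Λ̂`, which is the eigen-equation
rewritten with `B̂ = T⁻¹ Xᵀ F̂`. Multiplying it on the left by `T⁻¹ F̂ᵀ` gives `B̂ᵀ B̂ = Λ̂`,
and by `T⁻¹ F⁰ᵀ`, after expanding `X = F⁰ B⁰ᵀ + E`, gives `H̃₂ Λ̂ = B⁰ᵀ B̂ + T⁻¹ F⁰ᵀ E B̂`.
Expanding `X` in `B⁰ᵀ B̂` likewise gives `B⁰ᵀ B̂ = B⁰ᵀ B⁰ H̃₂ + T⁻¹ B⁰ᵀ Eᵀ F̂`; dividing by `Λ̂`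
yields (i) and (ii).
-/

open Matrix

namespace PrincipalComponents

variable {R : Type*} [CommRing R] {t n p q : Type*}
  {c : R} {X : Matrix t n R} {F : Matrix t p R} {B : Matrix n p R} {D : Matrix p p R}

theorem mul_loadings_eq_of_eigen [Fintype t] [Fintype n] [Fintype p]
    (hB : B = c • (Xᵀ * F)) (heig : (c • (X * Xᵀ)) * F = F * D) : X * B = F * D := by
  rw [← heig, hB, Matrix.mul_smul, Matrix.smul_mul, Matrix.mul_assoc]

theorem transpose_loadings [Fintype t] (hB : B = c • (Xᵀ * F)) : Bᵀ = c • (Fᵀ * X) := by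
  rw [hB, transpose_smul, transpose_mul, transpose_transpose]

theorem loadings_transpose_mul_self [Fintype t] [Fintype n] [Fintype p] [DecidableEq p]
    (hB : B = c • (Xᵀ * F)) (hF : c • (Fᵀ * F) = 1)
    (heig : (c • (X * Xᵀ)) * F = F * D) : Bᵀ * B = D := by
  rw [transpose_loadings hB, Matrix.smul_mul, Matrix.mul_assoc, mul_loadings_eq_of_eigen hB heig,
    ← Matrix.mul_assoc, ← Matrix.smul_mul, hF, Matrix.one_mul]

variable {F0 : Matrix t q R} {B0 : Matrix n q R} {E : Matrix t n R}

theorem transpose_mul_loadings_of_eq_add [Fintype t] [Fintype n] [Fintype q]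
    (hX : X = F0 * B0ᵀ + E) (hB : B = c • (Xᵀ * F)) :
    B0ᵀ * B = B0ᵀ * B0 * (c • (F0ᵀ * F)) + c • (B0ᵀ * Eᵀ * F) := by
  rw [hB, hX, transpose_add, transpose_mul, transpose_transpose]
  simp only [Matrix.add_mul, Matrix.mul_add, Matrix.mul_smul, smul_add, Matrix.mul_assoc]

theorem smul_transpose_mul_mul_eigen_eq [Fintype t] [Fintype n] [Fintype p] [Fintype q]
    [DecidableEq q] (hX : X = F0 * B0ᵀ + E) (hB : B = c • (Xᵀ * F))
    (heig : (c • (X * Xᵀ)) * F = F * D) (hF0 : c • (F0ᵀ * F0) = 1) :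
    (c • (F0ᵀ * F)) * D = B0ᵀ * B + c • (F0ᵀ * E * B) := by
  calc (c • (F0ᵀ * F)) * D = c • (F0ᵀ * (X * B)) := by
        rw [mul_loadings_eq_of_eigen hB heig, Matrix.smul_mul, Matrix.mul_assoc]
    _ = (c • (F0ᵀ * F0)) * (B0ᵀ * B) + c • (F0ᵀ * E * B) := by
        rw [hX]
        simp only [Matrix.add_mul, Matrix.mul_add, smul_add, Matrix.smul_mul, Matrix.mul_assoc]
    _ = B0ᵀ * B + c • (F0ᵀ * E * B) := by rw [hF0, Matrix.one_mul]

end PrincipalComponents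

open PrincipalComponents

theorem rotation_identities_I_II_general
    (T N r : ℕ)
    (F0 : Matrix (Fin T) (Fin r) ℝ) (B0 : Matrix (Fin N) (Fin r) ℝ)
    (E : Matrix (Fin T) (Fin N) ℝ)
    (X : Matrix (Fin T) (Fin N) ℝ) (hX : X = F0 * B0ᵀ + E)
    (Fhat : Matrix (Fin T) (Fin r) ℝ)
    (hFhat : (T : ℝ)⁻¹ • (Fhatᵀ * Fhat) = 1)
    (l : Fin r → ℝ) (hl : ∀ k, l k ≠ 0)
    (heig : ((T : ℝ)⁻¹ • (X * Xᵀ)) * Fhat = Fhat * Matrix.diagonal l)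
    (Bhat : Matrix (Fin N) (Fin r) ℝ)
    (hBhat : Bhat = (T : ℝ)⁻¹ • (Xᵀ * Fhat)) :
    -- (0)
    Bhatᵀ * Bhat = Matrix.diagonal l ∧
    -- (i)  H̃₄ − H̃ = T⁻¹ B⁰ᵀEᵀF̂ Λ̂⁻¹
    (B0ᵀ * Bhat * (Matrix.diagonal l)⁻¹
        - B0ᵀ * B0 * ((T : ℝ)⁻¹ • (F0ᵀ * Fhat)) * (Matrix.diagonal l)⁻¹
      = ((T : ℝ)⁻¹ • (B0ᵀ * Eᵀ * Fhat)) * (Matrix.diagonal l)⁻¹) ∧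
    -- (ii)  if T⁻¹F⁰ᵀF⁰ = I then H̃₂ − H̃₄ = T⁻¹ F⁰ᵀEB̂ Λ̂⁻¹
    (((T : ℝ)⁻¹ • (F0ᵀ * F0) = (1 : Matrix (Fin r) (Fin r) ℝ)) →
      (T : ℝ)⁻¹ • (F0ᵀ * Fhat) - B0ᵀ * Bhat * (Matrix.diagonal l)⁻¹
        = ((T : ℝ)⁻¹ • (F0ᵀ * E * Bhat)) * (Matrix.diagonal l)⁻¹) := by
  refine ⟨loadings_transpose_mul_self hBhat hFhat heig, ?_, fun hF0 => ?_⟩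
  · rw [transpose_mul_loadings_of_eq_add hX hBhat, add_mul, add_sub_cancel_left]
  · have hdet : IsUnit (diagonal l).det :=
      (isUnit_iff_isUnit_det _).mp (isUnit_diagonal.mpr (Pi.isUnit_iff.mpr fun k => (hl k).isUnit))
    rw [← mul_nonsing_inv_cancel_right (diagonal l) ((T : ℝ)⁻¹ • (F0ᵀ * Fhat)) hdet,
      smul_transpose_mul_mul_eigen_eq hX hBhat heig hF0, add_mul, add_sub_cancel_left]

/-- **Lemma B.4(i)–(ii) of the paper (with the normalization `B̂ᵀB̂ = Λ̂`).**
Let `X = F⁰B⁰ᵀ + E`, let `F̂` satisfy `T⁻¹F̂ᵀF̂ = I` and the eigen-equation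
`(T⁻¹XXᵀ)F̂ = F̂Λ̂` with `Λ̂ = diagonal l` invertible, and put `B̂ = T⁻¹XᵀF̂`.  Then
`B̂ᵀB̂ = Λ̂`; with `H̃₄ = B⁰ᵀB̂Λ̂⁻¹` and `H̃ = B⁰ᵀB⁰(T⁻¹F⁰ᵀF̂)Λ̂⁻¹` one has
`H̃₄ − H̃ = T⁻¹B⁰ᵀEᵀF̂Λ̂⁻¹`; and if moreover `T⁻¹F⁰ᵀF⁰ = I` then, with `H̃₂ = T⁻¹F⁰ᵀF̂`,
`H̃₂ − H̃₄ = T⁻¹F⁰ᵀEB̂Λ̂⁻¹`. -/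
theorem rotation_identities_I_II
    (T N r : ℕ) (hT : 0 < T)
    (F0 : Matrix (Fin T) (Fin r) ℝ) (B0 : Matrix (Fin N) (Fin r) ℝ)
    (E : Matrix (Fin T) (Fin N) ℝ)
    (X : Matrix (Fin T) (Fin N) ℝ) (hX : X = F0 * B0ᵀ + E)
    (Fhat : Matrix (Fin T) (Fin r) ℝ)
    (hFhat : (T : ℝ)⁻¹ • (Fhatᵀ * Fhat) = 1)
    (l : Fin r → ℝ) (hl : ∀ k, l k ≠ 0)
    (heig : ((T : ℝ)⁻¹ • (X * Xᵀ)) * Fhat = Fhat * Matrix.diagonal l)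
    (Bhat : Matrix (Fin N) (Fin r) ℝ)
    (hBhat : Bhat = (T : ℝ)⁻¹ • (Xᵀ * Fhat)) :
    -- (0)
    Bhatᵀ * Bhat = Matrix.diagonal l ∧
    -- (i)  H̃₄ − H̃ = T⁻¹ B⁰ᵀEᵀF̂ Λ̂⁻¹
    (B0ᵀ * Bhat * (Matrix.diagonal l)⁻¹
        - B0ᵀ * B0 * ((T : ℝ)⁻¹ • (F0ᵀ * Fhat)) * (Matrix.diagonal l)⁻¹
      = ((T : ℝ)⁻¹ • (B0ᵀ * Eᵀ * Fhat)) * (Matrix.diagonal l)⁻¹) ∧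
    -- (ii)  if T⁻¹F⁰ᵀF⁰ = I then H̃₂ − H̃₄ = T⁻¹ F⁰ᵀEB̂ Λ̂⁻¹
    (((T : ℝ)⁻¹ • (F0ᵀ * F0) = (1 : Matrix (Fin r) (Fin r) ℝ)) →
      (T : ℝ)⁻¹ • (F0ᵀ * Fhat) - B0ᵀ * Bhat * (Matrix.diagonal l)⁻¹
        = ((T : ℝ)⁻¹ • (F0ᵀ * E * Bhat)) * (Matrix.diagonal l)⁻¹) :=
  rotation_identities_I_II_general T N r F0 B0 E X hX Fhat hFhat l hl heig Bhat hBhat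
end

section
/- Let F⁰ ∈ ℝ^{T×r}, B⁰ ∈ ℝ^{N×r}, E ∈ ℝ^{T×N} and set X = F⁰B⁰ᵀ + E, and define B̂ = T⁻¹XᵀF̂ for a matrix F̂ ∈ ℝ^{T×r}. Write H̃₂ := T⁻¹F⁰ᵀF̂. Then: (v) if B⁰ᵀB⁰ and B̂ᵀB⁰ are invertible, the matrix H̃₁ := (B⁰ᵀB⁰)(B̂ᵀB⁰)⁻¹ is invertible and H̃₁⁻ᵀ − H̃₂ = (B⁰ᵀB⁰)⁻¹·T⁻¹B⁰ᵀEᵀF̂; (vi) if B̂ᵀB̂ and B̂ᵀB⁰ are invertible, the matrix H̃₄ := (B⁰ᵀB̂)(B̂ᵀB̂)⁻¹ is invertible and H̃₄⁻ᵀ − H̃₂ = (B̂ᵀB⁰)⁻¹·T⁻¹B̂ᵀEᵀF̂. -/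
/-!
Substituting `X = F⁰B⁰ᵀ + E` into `B̂`, every product `DᵀB̂` splits as `(DᵀB⁰) H̃₂ + T⁻¹ DᵀEᵀF̂`.
Both `H̃₁` and `H̃₄` have the form `(B⁰ᵀD)(B̂ᵀD)⁻¹`, with `D = B⁰` resp. `D = B̂`, and the inverse
transpose of such a matrix is `(DᵀB⁰)⁻¹ DᵀB̂`; multiplying out the split gives both identities.
-/

open Matrix

namespace Matrix

variable {m n k l : Type*} [Fintype n] [Fintype k] [Fintype l]
  {R : Type*} [CommRing R]

theorem isUnit_det_mul_nonsing_inv [DecidableEq n] {P Q : Matrix n n R} (hP : IsUnit P.det)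
    (hQ : IsUnit Q.det) :
    IsUnit (P * Q⁻¹).det := by
  rw [det_mul]
  exact hP.mul (isUnit_nonsing_inv_det Q hQ)

theorem transpose_inv_mul_nonsing_inv [DecidableEq n] (P : Matrix n n R) {Q : Matrix n n R}
    (hQ : IsUnit Q.det) :
    (P * Q⁻¹)⁻¹ᵀ = Pᵀ⁻¹ * Qᵀ := by
  rw [mul_inv_rev, nonsing_inv_nonsing_inv Q hQ, transpose_mul, transpose_nonsing_inv]

theorem mul_smul_transpose_factor_model (C : Matrix m l R) (F0 Fhat : Matrix n k R)
    (B0 : Matrix l k R) (E : Matrix n l R) (c : R) :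
    C * (c • ((F0 * B0ᵀ + E)ᵀ * Fhat))
      = C * B0 * (c • (F0ᵀ * Fhat)) + c • (C * Eᵀ * Fhat) := by
  rw [transpose_add, transpose_mul, transpose_transpose, Matrix.add_mul, smul_add,
    Matrix.mul_add, Matrix.mul_smul, Matrix.mul_smul, Matrix.mul_smul]
  simp only [Matrix.mul_assoc]

theorem transpose_inv_rotation_sub_eq [DecidableEq k] {F0 Fhat : Matrix n k R}
    {B0 Bhat D : Matrix l k R} {E : Matrix n l R} {c : R}
    (hBhat : Bhat = c • ((F0 * B0ᵀ + E)ᵀ * Fhat)) (hDB0 : IsUnit (Dᵀ * B0).det)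
    (hBhatD : IsUnit (Bhatᵀ * D).det) :
    IsUnit ((B0ᵀ * D) * (Bhatᵀ * D)⁻¹).det ∧
      ((B0ᵀ * D) * (Bhatᵀ * D)⁻¹)⁻¹ᵀ - c • (F0ᵀ * Fhat)
        = (Dᵀ * B0)⁻¹ * (c • (Dᵀ * Eᵀ * Fhat)) := by
  have hB0D : IsUnit (B0ᵀ * D).det := by
    rwa [← det_transpose, transpose_mul, transpose_transpose]
  refine ⟨isUnit_det_mul_nonsing_inv hB0D hBhatD, ?_⟩
  have hsplit : Dᵀ * Bhat = Dᵀ * B0 * (c • (F0ᵀ * Fhat)) + c • (Dᵀ * Eᵀ * Fhat) := by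
    rw [hBhat, mul_smul_transpose_factor_model]
  have hinvT : ((B0ᵀ * D) * (Bhatᵀ * D)⁻¹)⁻¹ᵀ = (Dᵀ * B0)⁻¹ * (Dᵀ * Bhat) := by
    rw [transpose_inv_mul_nonsing_inv _ hBhatD]
    simp only [transpose_mul, transpose_transpose]
  rw [hinvT, hsplit, Matrix.mul_add, ← Matrix.mul_assoc, nonsing_inv_mul _ hDB0, Matrix.one_mul,
    add_sub_cancel_left]

end Matrix

theorem rotation_identities_V_VI_general
    (T N r : ℕ)
    (F0 : Matrix (Fin T) (Fin r) ℝ) (B0 : Matrix (Fin N) (Fin r) ℝ)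
    (E : Matrix (Fin T) (Fin N) ℝ)
    (X : Matrix (Fin T) (Fin N) ℝ) (hX : X = F0 * B0ᵀ + E)
    (Fhat : Matrix (Fin T) (Fin r) ℝ)
    (Bhat : Matrix (Fin N) (Fin r) ℝ)
    (hBhat : Bhat = (T : ℝ)⁻¹ • (Xᵀ * Fhat)) :
    -- (v)
    (IsUnit (B0ᵀ * B0).det → IsUnit (Bhatᵀ * B0).det →
      IsUnit ((B0ᵀ * B0) * (Bhatᵀ * B0)⁻¹).det ∧
      ((((B0ᵀ * B0) * (Bhatᵀ * B0)⁻¹)⁻¹)ᵀ - (T : ℝ)⁻¹ • (F0ᵀ * Fhat)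
        = (B0ᵀ * B0)⁻¹ * ((T : ℝ)⁻¹ • (B0ᵀ * Eᵀ * Fhat)))) ∧
    -- (vi)
    (IsUnit (Bhatᵀ * Bhat).det → IsUnit (Bhatᵀ * B0).det →
      IsUnit ((B0ᵀ * Bhat) * (Bhatᵀ * Bhat)⁻¹).det ∧
      ((((B0ᵀ * Bhat) * (Bhatᵀ * Bhat)⁻¹)⁻¹)ᵀ - (T : ℝ)⁻¹ • (F0ᵀ * Fhat)
        = (Bhatᵀ * B0)⁻¹ * ((T : ℝ)⁻¹ • (Bhatᵀ * Eᵀ * Fhat)))) := by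
  subst hX
  exact ⟨fun hB0B0 hBhatB0 => transpose_inv_rotation_sub_eq hBhat hB0B0 hBhatB0,
    fun hBhatBhat hBhatB0 => transpose_inv_rotation_sub_eq hBhat hBhatB0 hBhatBhat⟩

/-- **Lemma B.4(v)–(vi) of the paper.**
Let `X = F⁰B⁰ᵀ + E` and `B̂ = T⁻¹XᵀF̂`, and write `H̃₂ = T⁻¹F⁰ᵀF̂`.  Then:
(v) if `B⁰ᵀB⁰` and `B̂ᵀB⁰` are invertible, `H̃₁ := (B⁰ᵀB⁰)(B̂ᵀB⁰)⁻¹` is invertible and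
`H̃₁⁻ᵀ − H̃₂ = (B⁰ᵀB⁰)⁻¹ ⬝ T⁻¹B⁰ᵀEᵀF̂`;
(vi) if `B̂ᵀB̂` and `B̂ᵀB⁰` are invertible, `H̃₄ := (B⁰ᵀB̂)(B̂ᵀB̂)⁻¹` is invertible and
`H̃₄⁻ᵀ − H̃₂ = (B̂ᵀB⁰)⁻¹ ⬝ T⁻¹B̂ᵀEᵀF̂`. -/
theorem rotation_identities_V_VI
    (T N r : ℕ) (hT : 0 < T)
    (F0 : Matrix (Fin T) (Fin r) ℝ) (B0 : Matrix (Fin N) (Fin r) ℝ)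
    (E : Matrix (Fin T) (Fin N) ℝ)
    (X : Matrix (Fin T) (Fin N) ℝ) (hX : X = F0 * B0ᵀ + E)
    (Fhat : Matrix (Fin T) (Fin r) ℝ)
    (Bhat : Matrix (Fin N) (Fin r) ℝ)
    (hBhat : Bhat = (T : ℝ)⁻¹ • (Xᵀ * Fhat)) :
    -- (v)
    (IsUnit (B0ᵀ * B0).det → IsUnit (Bhatᵀ * B0).det →
      IsUnit ((B0ᵀ * B0) * (Bhatᵀ * B0)⁻¹).det ∧
      ((((B0ᵀ * B0) * (Bhatᵀ * B0)⁻¹)⁻¹)ᵀ - (T : ℝ)⁻¹ • (F0ᵀ * Fhat)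
        = (B0ᵀ * B0)⁻¹ * ((T : ℝ)⁻¹ • (B0ᵀ * Eᵀ * Fhat)))) ∧
    -- (vi)
    (IsUnit (Bhatᵀ * Bhat).det → IsUnit (Bhatᵀ * B0).det →
      IsUnit ((B0ᵀ * Bhat) * (Bhatᵀ * Bhat)⁻¹).det ∧
      ((((B0ᵀ * Bhat) * (Bhatᵀ * Bhat)⁻¹)⁻¹)ᵀ - (T : ℝ)⁻¹ • (F0ᵀ * Fhat)
        = (Bhatᵀ * B0)⁻¹ * ((T : ℝ)⁻¹ • (Bhatᵀ * Eᵀ * Fhat)))) :=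
  rotation_identities_V_VI_general T N r F0 B0 E X hX Fhat Bhat hBhat
end
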